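/- arXiv:1212.3721 — 2 statements merged into one kernel-verified Lean document; each statement's English description precedes it below -/
import Mathlib

section
/- Let V be a symmetric positive semidefinite d×d matrix, C an r×d matrix, Π a symmetric positive definite r×r matrix, and K := V Cᵀ (C V Cᵀ + Π)⁻¹. Then the updated matrix V − K C V is symmetric positive semidefinite. -/
open Matrix in
theorem stmt_8 {d r : ℕ}
    (V : Matrix (Fin d) (Fin d) ℝ) (hV : V.PosSemidef)
    (C : Matrix (Fin r) (Fin d) ℝ)
    (Pi : Matrix (Fin r) (Fin r) ℝ) (hPi : Pi.PosDef)
    (K : Matrix (Fin d) (Fin r) ℝ)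
    (hK : K = V * Cᵀ * (C * V * Cᵀ + Pi)⁻¹) :
    (V - K * C * V).PosSemidef := by
  set S : Matrix (Fin r) (Fin r) ℝ := C * V * Cᵀ + Pi with hS
  have hSpd : S.PosDef := Matrix.PosDef.posSemidef_add (hV.mul_mul_conjTranspose_same C) hPi
  have hVsymm : Vᵀ = V := hV.isHermitian
  have hKS : K * S = V * Cᵀ := by
    rw [hK, Matrix.mul_assoc, Matrix.nonsing_inv_mul S ((Matrix.isUnit_iff_isUnit_det _).1 hSpd.isUnit),
      Matrix.mul_one]
  have h1 : K * (S * Kᵀ) = V * (Cᵀ * Kᵀ) := by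
    rw [← Matrix.mul_assoc, hKS, Matrix.mul_assoc]
  rw [hS] at h1
  have key : V - K * C * V = (1 - K * C) * V * (1 - K * C)ᵀ + K * Pi * Kᵀ := by
    simp only [transpose_sub, transpose_one, transpose_mul, hVsymm, Matrix.sub_mul,
      Matrix.mul_sub, Matrix.one_mul, Matrix.mul_one, Matrix.add_mul, Matrix.mul_add,
      Matrix.mul_assoc] at h1 ⊢
    rw [sub_eq_of_eq_add' h1.symm]
    abel
  rw [key]
  exact ((hV.mul_mul_conjTranspose_same _).add (hPi.posSemidef.mul_mul_conjTranspose_same K))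
end

section
/- Let z be an ℝʳ-valued random vector with mean μ₀ and covariance Σ₀ (symmetric positive definite). Define l(μ, Σ) = ln det Σ + E[(z − μ)ᵀ Σ⁻¹ (z − μ)] over μ ∈ ℝʳ and Σ symmetric positive definite. Then l(μ, Σ) ≥ l(μ₀, Σ₀) = ln det Σ₀ + r, with equality iff μ = μ₀ and Σ = Σ₀. -/
/-!
Expanding around the true mean, `E[(z - μ)ᵀ Σ⁻¹ (z - μ)] = tr (Σ⁻¹ Σ₀) + (μ₀ - μ)ᵀ Σ⁻¹ (μ₀ - μ)`,
so the criterion splits into a matrix part and a positive definite quadratic form in `μ₀ - μ`.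
For the matrix part write `Σ₀ = Bᴴ B`: then `A = B Σ⁻¹ Bᴴ` is positive definite with
`tr A = tr (Σ⁻¹ Σ₀)` and `ln det A = ln det Σ₀ - ln det Σ`, and
`tr A - ln det A - r = ∑ (λ - 1 - ln λ) ≥ 0` over the eigenvalues `λ` of `A`, with equality only
if every `λ = 1`, i.e. `A = 1`, i.e. `Σ = Σ₀`.
-/

namespace Matrix

variable {n : Type*} [Fintype n]

theorem dotProduct_mulVec_eq_sum {R : Type*} [CommSemiring R] (M : Matrix n n R) (x : n → R) :
    x ⬝ᵥ M *ᵥ x = ∑ i, ∑ j, M i j * (x i * x j) := by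
  simp only [dotProduct, mulVec, Finset.mul_sum]
  exact Finset.sum_congr rfl fun i _ => Finset.sum_congr rfl fun j _ => by ring

theorem PosDef.eq_zero_of_dotProduct_mulVec_self_eq_zero {A : Matrix n n ℝ} (hA : A.PosDef)
    {x : n → ℝ} (h : x ⬝ᵥ A *ᵥ x = 0) : x = 0 := by
  by_contra hx
  simpa [h] using hA.dotProduct_mulVec_pos hx

variable [DecidableEq n]

theorem IsHermitian.eq_one_of_eigenvalues_eq_one {𝕜 : Type*} [RCLike 𝕜] {A : Matrix n n 𝕜}
    (hA : A.IsHermitian) (h : ∀ i, hA.eigenvalues i = 1) : A = 1 := by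
  have hdiag : (RCLike.ofReal ∘ hA.eigenvalues : n → 𝕜) = fun _ => 1 := by ext i; simp [h]
  rw [hA.spectral_theorem, hdiag, diagonal_one, map_one]

theorem PosDef.trace_sub_card_sub_log_det {A : Matrix n n ℝ} (hA : A.PosDef) :
    A.trace - Fintype.card n - Real.log A.det =
      ∑ i, (hA.1.eigenvalues i - 1 - Real.log (hA.1.eigenvalues i)) := by
  simp only [hA.1.trace_eq_sum_eigenvalues, hA.1.det_eq_prod_eigenvalues,
    RCLike.ofReal_real_eq_id, id, Real.log_prod fun i _ => (hA.eigenvalues_pos i).ne']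
  simp [Finset.sum_sub_distrib]

theorem PosDef.card_add_log_det_le_trace {A : Matrix n n ℝ} (hA : A.PosDef) :
    Fintype.card n + Real.log A.det ≤ A.trace := by
  have h := hA.trace_sub_card_sub_log_det
  have : 0 ≤ ∑ i, (hA.1.eigenvalues i - 1 - Real.log (hA.1.eigenvalues i)) :=
    Finset.sum_nonneg fun i _ => sub_nonneg.2 (Real.log_le_sub_one_of_pos (hA.eigenvalues_pos i))
  linarith

theorem PosDef.eq_one_of_card_add_log_det_eq_trace {A : Matrix n n ℝ} (hA : A.PosDef)
    (h : Fintype.card n + Real.log A.det = A.trace) : A = 1 := by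
  have hsum : ∑ i, (hA.1.eigenvalues i - 1 - Real.log (hA.1.eigenvalues i)) = 0 := by
    rw [← hA.trace_sub_card_sub_log_det]; linarith
  refine hA.1.eq_one_of_eigenvalues_eq_one fun i => ?_
  have hi := (Finset.sum_eq_zero_iff_of_nonneg fun i _ =>
    sub_nonneg.2 (Real.log_le_sub_one_of_pos (hA.eigenvalues_pos i))).1 hsum i (Finset.mem_univ i)
  by_contra hne
  linarith [Real.log_lt_sub_one_of_pos (hA.eigenvalues_pos i) hne]

open scoped MatrixOrder in
theorem PosDef.log_det_add_card_le_log_det_add_trace_inv_mul {S₀ S : Matrix n n ℝ}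
    (hS₀ : S₀.PosDef) (hS : S.PosDef) :
    Real.log S₀.det + Fintype.card n ≤ Real.log S.det + (S⁻¹ * S₀).trace ∧
      (Real.log S.det + (S⁻¹ * S₀).trace = Real.log S₀.det + Fintype.card n → S = S₀) := by
  obtain ⟨B, hB, hS₀B⟩ :=
    CStarAlgebra.isStrictlyPositive_iff_eq_star_mul_self.mp hS₀.isStrictlyPositive
  set A := B * S⁻¹ * star B
  have hA : A.PosDef := (IsUnit.posDef_star_right_conjugate_iff hB).2 hS.inv
  have htrace : A.trace = (S⁻¹ * S₀).trace := by
    rw [trace_mul_cycle, hS₀B, trace_mul_comm]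
  have hlog : Real.log A.det = Real.log S₀.det - Real.log S.det := by
    rw [← Real.log_div hS₀.det_pos.ne' hS.det_pos.ne', hS₀B]
    simp only [A, det_mul, det_nonsing_inv, Ring.inverse_eq_inv']
    congr 1
    ring
  refine ⟨by linarith [hA.card_add_log_det_le_trace], fun h => ?_⟩
  have hA1 : B * (S⁻¹ * star B) = 1 := by
    rw [← mul_assoc]; exact hA.eq_one_of_card_add_log_det_eq_trace (by linarith)
  have hSS₀ : S⁻¹ * S₀ = 1 := by
    rw [hS₀B, ← mul_assoc]; exact mul_eq_one_comm.1 hA1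
  rw [← inv_eq_right_inv hSS₀, nonsing_inv_nonsing_inv _ hS.det_pos.ne'.isUnit]

end Matrix

open MeasureTheory Matrix

section SecondMoments

variable {Ω ι : Type*} [MeasurableSpace Ω] {P : Measure Ω} {X : Ω → ι → ℝ}

theorem integrable_sub_mul_sub [IsFiniteMeasure P] (hX₁ : ∀ i, Integrable (fun ω => X ω i) P)
    (hX₂ : ∀ i j, Integrable (fun ω => X ω i * X ω j) P) (a : ι → ℝ) (i j : ι) :
    Integrable (fun ω => (X ω i - a i) * (X ω j - a j)) P := by
  simp_rw [sub_mul, mul_sub]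
  exact ((hX₂ i j).sub ((hX₁ i).mul_const _)).sub (((hX₁ j).const_mul _).sub (integrable_const _))

theorem integral_sub_mul_sub [IsProbabilityMeasure P] (hX₁ : ∀ i, Integrable (fun ω => X ω i) P)
    (hX₂ : ∀ i j, Integrable (fun ω => X ω i * X ω j) P) {m : ι → ℝ}
    (hm : ∀ i, ∫ ω, X ω i ∂P = m i) (a : ι → ℝ) (i j : ι) :
    ∫ ω, (X ω i - a i) * (X ω j - a j) ∂P =
      ∫ ω, X ω i * X ω j ∂P - m i * a j - a i * m j + a i * a j := by
  have hexpand : (fun ω => (X ω i - a i) * (X ω j - a j)) =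
      fun ω => (X ω i * X ω j - a j * X ω i) - (a i * X ω j - a i * a j) := by
    ext ω; ring
  rw [hexpand, integral_sub, integral_sub (hX₂ i j) ((hX₁ i).const_mul _),
    integral_sub ((hX₁ j).const_mul _) (integrable_const _),
    integral_const_mul, integral_const_mul, integral_const, hm, hm]
  · simp only [probReal_univ, smul_eq_mul, one_mul]
    ring
  exacts [(hX₂ i j).sub ((hX₁ i).const_mul _), ((hX₁ j).const_mul _).sub (integrable_const _)]

theorem integral_sub_mul_sub_eq_add [IsProbabilityMeasure P]
    (hX₁ : ∀ i, Integrable (fun ω => X ω i) P)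
    (hX₂ : ∀ i j, Integrable (fun ω => X ω i * X ω j) P) {m : ι → ℝ}
    (hm : ∀ i, ∫ ω, X ω i ∂P = m i) (a : ι → ℝ) (i j : ι) :
    ∫ ω, (X ω i - a i) * (X ω j - a j) ∂P =
      ∫ ω, (X ω i - m i) * (X ω j - m j) ∂P + (m i - a i) * (m j - a j) := by
  rw [integral_sub_mul_sub hX₁ hX₂ hm, integral_sub_mul_sub hX₁ hX₂ hm]
  ring

theorem integral_dotProduct_mulVec_sub [IsProbabilityMeasure P] [Fintype ι]
    (hX₁ : ∀ i, Integrable (fun ω => X ω i) P)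
    (hX₂ : ∀ i j, Integrable (fun ω => X ω i * X ω j) P) {m : ι → ℝ}
    (hm : ∀ i, ∫ ω, X ω i ∂P = m i) {S : Matrix ι ι ℝ}
    (hS : ∀ i j, ∫ ω, (X ω i - m i) * (X ω j - m j) ∂P = S i j) (M : Matrix ι ι ℝ) (a : ι → ℝ) :
    ∫ ω, (X ω - a) ⬝ᵥ M *ᵥ (X ω - a) ∂P = (M * S).trace + (m - a) ⬝ᵥ M *ᵥ (m - a) := by
  have hint := integrable_sub_mul_sub hX₁ hX₂ a
  have hS_symm : ∀ i j, S j i = S i j := fun i j => by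
    simp_rw [← hS, mul_comm]
  calc ∫ ω, (X ω - a) ⬝ᵥ M *ᵥ (X ω - a) ∂P
      = ∑ i, ∑ j, M i j * ∫ ω, (X ω i - a i) * (X ω j - a j) ∂P := by
        simp_rw [dotProduct_mulVec_eq_sum, Pi.sub_apply]
        rw [integral_finsetSum _ fun i _ =>
          integrable_finsetSum _ fun j _ => (hint i j).const_mul (M i j)]
        simp_rw [integral_finsetSum _ fun j _ => (hint _ j).const_mul _, integral_const_mul]
    _ = ∑ i, ∑ j, M i j * (S i j + (m i - a i) * (m j - a j)) := by
        refine Finset.sum_congr rfl fun i _ => Finset.sum_congr rfl fun j _ => ?_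
        rw [integral_sub_mul_sub_eq_add hX₁ hX₂ hm, hS]
    _ = (M * S).trace + (m - a) ⬝ᵥ M *ᵥ (m - a) := by
        simp [dotProduct_mulVec_eq_sum, mul_add, Finset.sum_add_distrib, trace, mul_apply, hS_symm]

end SecondMoments

open Matrix MeasureTheory in
theorem stmt_13 {Ω : Type*} [MeasurableSpace Ω] (P : Measure Ω) [IsProbabilityMeasure P]
    {r : ℕ} (z : Ω → Fin r → ℝ)
    (hz1 : ∀ i, Integrable (fun ω => z ω i) P)
    (hz2 : ∀ i j, Integrable (fun ω => z ω i * z ω j) P)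
    (μ0 : Fin r → ℝ) (hμ0 : ∀ i, (∫ ω, z ω i ∂P) = μ0 i)
    (S0 : Matrix (Fin r) (Fin r) ℝ)
    (hS0 : ∀ i j, (∫ ω, (z ω i - μ0 i) * (z ω j - μ0 j) ∂P) = S0 i j)
    (hS0pd : S0.PosDef)
    (l : (Fin r → ℝ) → Matrix (Fin r) (Fin r) ℝ → ℝ)
    (hl : ∀ μ S, l μ S = Real.log S.det + ∫ ω, (z ω - μ) ⬝ᵥ S⁻¹.mulVec (z ω - μ) ∂P) :
    l μ0 S0 = Real.log S0.det + r ∧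
    ∀ (μ : Fin r → ℝ) (S : Matrix (Fin r) (Fin r) ℝ), S.PosDef →
      l μ0 S0 ≤ l μ S ∧ (l μ S = l μ0 S0 ↔ μ = μ0 ∧ S = S0) := by
  have hl' : ∀ μ S, l μ S =
      Real.log S.det + (S⁻¹ * S0).trace + (μ0 - μ) ⬝ᵥ S⁻¹ *ᵥ (μ0 - μ) := fun μ S => by
    rw [hl, integral_dotProduct_mulVec_sub hz1 hz2 hμ0 hS0, add_assoc]
  have hl0 : l μ0 S0 = Real.log S0.det + r := by
    simp [hl', nonsing_inv_mul _ hS0pd.det_pos.ne'.isUnit]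
  refine ⟨hl0, fun μ S hS => ?_⟩
  obtain ⟨hle, heq⟩ := hS0pd.log_det_add_card_le_log_det_add_trace_inv_mul hS
  rw [Fintype.card_fin] at hle heq
  have hq : 0 ≤ (μ0 - μ) ⬝ᵥ S⁻¹ *ᵥ (μ0 - μ) := by
    simpa using hS.inv.posSemidef.dotProduct_mulVec_nonneg (μ0 - μ)
  refine ⟨by linarith [hl' μ S], fun h => ?_, by rintro ⟨rfl, rfl⟩; rfl⟩
  rw [hl0, hl'] at h
  have hq0 : (μ0 - μ) ⬝ᵥ S⁻¹ *ᵥ (μ0 - μ) = 0 := by linarith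
  exact ⟨(sub_eq_zero.1 (hS.inv.eq_zero_of_dotProduct_mulVec_self_eq_zero hq0)).symm,
    heq (by linarith)⟩
end
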